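/- Let H be a quasitriangular Hopf algebra over a commutative ring k with R-matrix R and Drinfeld element u = Σ S(R⁽²⁾)·R⁽¹⁾. Then for all h ∈ H: S²(h) = u · h · u⁻¹, i.e. the square of the antipode is the inner automorphism given by conjugation by u. -/

import Mathlib

/-!
Applying `a ⊗ b ↦ S(b) a` to both sides of `Δᵒᵖ(x) R = R Δ(x)` gives `∑ S(x₂) u x₁ = ε(x) u`.
Evaluating `x ⊗ y ⊗ z ↦ S(y S(z)) u x` on the two sides of coassociativity at `h` then yields
`S²(h) u` (by this identity) and `u h` (by the antipode axiom), and `u` has a right inverse.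
-/

open TensorProduct

variable (k : Type*) [CommRing k] (H : Type*) [Ring H] [HopfAlgebra k H]

/-- `R ⊗ 1` in `H ⊗ H ⊗ H`. -/
noncomputable def leg12 : H ⊗[k] H →ₐ[k] H ⊗[k] (H ⊗[k] H) :=
  Algebra.TensorProduct.map (AlgHom.id k H) Algebra.TensorProduct.includeLeft

/-- `R` with legs in factors 1 and 3. -/
noncomputable def leg13 : H ⊗[k] H →ₐ[k] H ⊗[k] (H ⊗[k] H) :=
  Algebra.TensorProduct.map (AlgHom.id k H) Algebra.TensorProduct.includeRight

/-- `1 ⊗ R` in `H ⊗ H ⊗ H`. -/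
noncomputable def leg23 : H ⊗[k] H →ₐ[k] H ⊗[k] (H ⊗[k] H) :=
  Algebra.TensorProduct.includeRight

/-- `id ⊗ Δ`. -/
noncomputable def idComul : H ⊗[k] H →ₐ[k] H ⊗[k] (H ⊗[k] H) :=
  Algebra.TensorProduct.map (AlgHom.id k H) (Bialgebra.comulAlgHom k H)

/-- `Δ ⊗ id` (landing in `H ⊗ (H ⊗ H)` via the associator). -/
noncomputable def comulId : H ⊗[k] H →ₐ[k] H ⊗[k] (H ⊗[k] H) :=
  (Algebra.TensorProduct.assoc k k k H H H).toAlgHom.comp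
    (Algebra.TensorProduct.map (Bialgebra.comulAlgHom k H) (AlgHom.id k H))

/-- The opposite comultiplication `Δᵒᵖ = τ ∘ Δ`. -/
noncomputable def comulOp : H →ₐ[k] H ⊗[k] H :=
  (Algebra.TensorProduct.comm k H H).toAlgHom.comp (Bialgebra.comulAlgHom k H)

/-- The Drinfeld element `u = Σ S(R⁽²⁾)·R⁽¹⁾` of a quasitriangular Hopf algebra. -/
noncomputable def drinfeldU (R : H ⊗[k] H) : H :=
  LinearMap.mul' k H
    (TensorProduct.map (HopfAlgebra.antipode (R := k)) (LinearMap.id : H →ₗ[k] H)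
      ((TensorProduct.comm k H H) R))

open Coalgebra HopfAlgebra

section HopfAlgebra

variable {R A : Type*} [CommSemiring R] [Semiring A] [HopfAlgebra R A]

lemma Coalgebra.sum_counit_right_smul {a : A} {ι : Type*} (r : Repr R a ι) :
    ∑ i ∈ r.index, counit (R := R) (r.right i) • r.left i = a := by
  have := congrArg (_root_.TensorProduct.rid R A) (sum_tmul_counit_eq r)
  simpa only [map_sum, _root_.TensorProduct.rid_tmul, one_smul] using this

lemma HopfAlgebra.antipode_algebraMap (c : R) :
    antipode R (algebraMap R A c) = algebraMap R A c := by
  rw [Algebra.algebraMap_eq_smul_one, map_smul, antipode_one]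

lemma HopfAlgebra.antipode_antipode_mul_eq_mul {u : A}
    (hu : ∀ x : A, ∑ i ∈ (ℛ R x).index,
      antipode R ((ℛ R x).right i) * (u * (ℛ R x).left i) = counit (R := R) x • u) (h : A) :
    antipode R (antipode R h) * u = u * h := by
  obtain ⟨g, hg⟩ : ∃ g : A ⊗[R] (A ⊗[R] A) →ₗ[R] A,
      ∀ x y z, g (x ⊗ₜ (y ⊗ₜ z)) = antipode R (y * antipode R z) * (u * x) :=
    ⟨LinearMap.mul' R A ∘ₗ TensorProduct.map
      (antipode R ∘ₗ LinearMap.mul' R A ∘ₗ (antipode R).lTensor A) (LinearMap.mulLeft R u) ∘ₗ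
      (TensorProduct.comm R A (A ⊗[R] A)).toLinearMap, fun x y z => by simp⟩
  set r := ℛ R h
  have left_nested : ∑ i ∈ r.index, ∑ j ∈ (ℛ R (r.left i)).index,
      g ((ℛ R (r.left i)).left j ⊗ₜ ((ℛ R (r.left i)).right j ⊗ₜ r.right i)) =
        antipode R (antipode R h) * u := by
    simp_rw [hg, antipode_mul_antidistrib, mul_assoc, ← Finset.mul_sum, hu, mul_smul_comm,
      ← smul_mul_assoc, ← Finset.sum_mul, ← map_smul, ← map_sum, r, sum_counit_smul]
  have right_nested : ∑ i ∈ r.index, ∑ j ∈ (ℛ R (r.right i)).index,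
      g (r.left i ⊗ₜ ((ℛ R (r.right i)).left j ⊗ₜ (ℛ R (r.right i)).right j)) = u * h := by
    simp_rw [hg, ← Finset.sum_mul, ← map_sum, sum_mul_antipode_eq_algebraMap_counit,
      antipode_algebraMap, ← Algebra.smul_def, ← mul_smul_comm, ← Finset.mul_sum, r,
      sum_counit_right_smul]
  simp only [← map_sum] at left_nested right_nested
  rw [← left_nested, sum_tmul_tmul_eq r _ fun i => ℛ R (r.right i), right_nested]

end HopfAlgebra

section DrinfeldElement

noncomputable def drinfeldMap : H ⊗[k] H →ₗ[k] H :=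
  LinearMap.mul' k H ∘ₗ TensorProduct.map (antipode k) LinearMap.id ∘ₗ
    (TensorProduct.comm k H H).toLinearMap

variable {k H}

lemma drinfeldU_eq_drinfeldMap (R : H ⊗[k] H) : drinfeldU k H R = drinfeldMap k H R := rfl

@[simp]
lemma drinfeldMap_tmul (a b : H) : drinfeldMap k H (a ⊗ₜ b) = antipode k b * a := by
  simp [drinfeldMap]

lemma comulOp_eq_sum {x : H} {ι : Type*} (r : Repr k x ι) :
    comulOp k H x = ∑ i ∈ r.index, r.right i ⊗ₜ r.left i := by
  simp [comulOp, ← r.eq, map_sum]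

lemma drinfeldMap_comulOp_mul (x : H) (t : H ⊗[k] H) :
    drinfeldMap k H (comulOp k H x * t) = counit (R := k) x • drinfeldMap k H t := by
  induction t using TensorProduct.induction_on with
  | zero => simp
  | add t t' ht ht' => rw [mul_add, map_add, map_add, ht, ht', smul_add]
  | tmul a b =>
    rw [comulOp_eq_sum (ℛ k x), Finset.sum_mul, map_sum]
    simp_rw [Algebra.TensorProduct.tmul_mul_tmul, drinfeldMap_tmul, antipode_mul_antidistrib,
      mul_assoc, ← Finset.mul_sum, ← mul_assoc (antipode k _), ← Finset.sum_mul,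
      sum_antipode_mul_eq_algebraMap_counit, ← Algebra.smul_def, mul_smul_comm]

lemma drinfeldMap_mul_comul {x : H} {ι : Type*} (r : Repr k x ι) (t : H ⊗[k] H) :
    drinfeldMap k H (t * comul x) =
      ∑ i ∈ r.index, antipode k (r.right i) * (drinfeldMap k H t * r.left i) := by
  induction t using TensorProduct.induction_on with
  | zero => simp
  | add t t' ht ht' => simp only [add_mul, map_add, ht, ht', mul_add, Finset.sum_add_distrib]
  | tmul a b =>
    simp_rw [← r.eq, Finset.mul_sum, map_sum, Algebra.TensorProduct.tmul_mul_tmul,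
      drinfeldMap_tmul, antipode_mul_antidistrib, mul_assoc]

lemma sum_antipode_mul_drinfeldU_mul (R : H ⊗[k] H)
    (hR : ∀ h : H, comulOp k H h * R = R * Bialgebra.comulAlgHom k H h)
    {x : H} {ι : Type*} (r : Repr k x ι) :
    ∑ i ∈ r.index, antipode k (r.right i) * (drinfeldU k H R * r.left i) =
      counit (R := k) x • drinfeldU k H R := by
  rw [drinfeldU_eq_drinfeldMap, ← drinfeldMap_mul_comul r, ← Bialgebra.comulAlgHom_apply, ← hR,
    drinfeldMap_comulOp_mul]

end DrinfeldElement

theorem stmt7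
    (R : H ⊗[k] H)
    (hR₃ : ∀ h : H, comulOp k H h * R = R * Bialgebra.comulAlgHom k H h)
    (u' : H) (hu₁ : drinfeldU k H R * u' = 1) :
    ∀ h : H, HopfAlgebra.antipode (R := k) (HopfAlgebra.antipode (R := k) h) =
      drinfeldU k H R * h * u' := by
  intro h
  have conj := antipode_antipode_mul_eq_mul
    (fun x => sum_antipode_mul_drinfeldU_mul R hR₃ (ℛ k x)) h
  calc antipode k (antipode k h) = antipode k (antipode k h) * (drinfeldU k H R * u') := by
        rw [hu₁, mul_one]
    _ = drinfeldU k H R * h * u' := by rw [← mul_assoc, conj]
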